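/- arXiv:1207.5127 — 3 statements merged into one kernel-verified Lean document; each statement's English description precedes it below -/
import Mathlib

section
/- Let n, α, λ, β, c be real numbers with n ≠ 1, let I ⊆ ℝ be an open interval, and let V : ℝ → ℝ be twice differentiable on I with V(z) > 0 for all z ∈ I. Suppose V satisfies -λ·(n-1)²·V² + β·(n-1)²·V³ + (α - c²)·(n-1)·V·V'' + (α - c²)·(2-n)·(V')² = 0 on I. Then the function U := V^(1/(n-1)) (real power) satisfies (α - c²)·U'' - λ·U + β·V^(n/(n-1)) = 0 on I, i.e. U satisfies the travelling-wave PHI-four equation (α - c²)·U'' - λ·U + β·Uⁿ = 0 with Uⁿ interpreted as V^(n/(n-1)). -/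
/-!
Writing `k = 1/(n-1)`, the chain rule gives
`U'' = k V^(k-1) V'' + k(k-1) V^(k-2) (V')²`, and since `k(k-1) = (2-n)/(n-1)²` and
`V^(n/(n-1)) = V^(k+1)`, the left-hand side of the PHI-four equation equals
`V^(k-2)/(n-1)²` times the left-hand side of the transformed equation for `V`.
-/

open Filter Topology

theorem deriv_deriv_rpow_const {f : ℝ → ℝ} {z : ℝ} (p : ℝ)
    (hf : ∀ᶠ w in 𝓝 z, DifferentiableAt ℝ f w ∧ f w ≠ 0)
    (hf' : DifferentiableAt ℝ (deriv f) z) :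
    deriv (deriv fun y => f y ^ p) z =
      p * f z ^ (p - 1) * deriv (deriv f) z + p * (p - 1) * f z ^ (p - 2) * deriv f z ^ 2 := by
  have hderiv : deriv (fun y => f y ^ p) =ᶠ[𝓝 z] fun w => deriv f w * p * f w ^ (p - 1) :=
    hf.mono fun w hw => deriv_rpow_const hw.1 (Or.inl hw.2)
  obtain ⟨hfz, hfz_ne⟩ := hf.self_of_nhds
  have hpow : HasDerivAt (fun w => f w ^ (p - 1))
      (deriv f z * (p - 1) * f z ^ (p - 1 - 1)) z :=
    hfz.hasDerivAt.rpow_const (Or.inl hfz_ne)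
  rw [hderiv.deriv_eq]
  refine ((hf'.hasDerivAt.mul_const p).mul hpow).deriv.trans ?_
  rw [sub_sub, one_add_one_eq_two]
  ring

theorem phi_four_residual_eq_rpow_mul_transformed {n α lam β c x v₁ v₂ : ℝ}
    (hn : n ≠ 1) (hx : x ≠ 0) :
    (α - c ^ 2) * (1 / (n - 1) * x ^ (1 / (n - 1) - 1) * v₂
        + 1 / (n - 1) * (1 / (n - 1) - 1) * x ^ (1 / (n - 1) - 2) * v₁ ^ 2)
      - lam * x ^ (1 / (n - 1)) + β * x ^ (n / (n - 1)) =
    x ^ (1 / (n - 1) - 2) / (n - 1) ^ 2 *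
      (-lam * (n - 1) ^ 2 * x ^ 2 + β * (n - 1) ^ 2 * x ^ 3
        + (α - c ^ 2) * (n - 1) * x * v₂ + (α - c ^ 2) * (2 - n) * v₁ ^ 2) := by
  have hn' : n - 1 ≠ 0 := sub_ne_zero.mpr hn
  have hpow : ∀ m : ℕ, x ^ (1 / (n - 1) - 2 + m) = x ^ (1 / (n - 1) - 2) * x ^ m :=
    Real.rpow_add_natCast hx _
  have h₁ : x ^ (1 / (n - 1) - 1) = x ^ (1 / (n - 1) - 2) * x ^ 1 := by
    rw [← hpow 1]; congr 1; push_cast; ring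
  have h₂ : x ^ (1 / (n - 1)) = x ^ (1 / (n - 1) - 2) * x ^ 2 := by
    rw [← hpow 2]; congr 1; push_cast; ring
  have h₃ : x ^ (n / (n - 1)) = x ^ (1 / (n - 1) - 2) * x ^ 3 := by
    rw [← hpow 3]; congr 1; push_cast; field_simp; ring
  rw [h₁, h₂, h₃]
  field_simp
  ring

/-- If `V > 0` is twice differentiable on an open interval and satisfies the
transformed equation
`-λ(n-1)²V² + β(n-1)²V³ + (α-c²)(n-1)V·V'' + (α-c²)(2-n)(V')² = 0`,
then `U = V^(1/(n-1))` satisfies the travelling-wave PHI-four equation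
`(α-c²)·U'' - λ·U + β·Uⁿ = 0`, with `Uⁿ` interpreted as `V^(n/(n-1))`. -/
theorem variant_PHI_four_power_transformation
    (n α lam β c a b : ℝ) (hn : n ≠ 1) (V : ℝ → ℝ)
    (hV₁ : ∀ z ∈ Set.Ioo a b, DifferentiableAt ℝ V z)
    (hV₂ : ∀ z ∈ Set.Ioo a b, DifferentiableAt ℝ (deriv V) z)
    (hVpos : ∀ z ∈ Set.Ioo a b, 0 < V z)
    (hODE : ∀ z ∈ Set.Ioo a b,
      -lam * (n - 1) ^ 2 * V z ^ 2 + β * (n - 1) ^ 2 * V z ^ 3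
        + (α - c ^ 2) * (n - 1) * V z * deriv (deriv V) z
        + (α - c ^ 2) * (2 - n) * (deriv V z) ^ 2 = 0) :
    ∀ z ∈ Set.Ioo a b,
      (α - c ^ 2) * deriv (deriv (fun y => V y ^ (1 / (n - 1)))) z
        - lam * V z ^ (1 / (n - 1)) + β * V z ^ (n / (n - 1)) = 0 := by
  intro z hz
  have hV : ∀ᶠ w in 𝓝 z, DifferentiableAt ℝ V w ∧ V w ≠ 0 :=
    eventually_of_mem (isOpen_Ioo.mem_nhds hz) fun w hw => ⟨hV₁ w hw, (hVpos w hw).ne'⟩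
  rw [deriv_deriv_rpow_const _ hV (hV₂ z hz),
    phi_four_residual_eq_rpow_mul_transformed hn (hVpos z hz).ne',
    hODE z hz, mul_zero]
end

section
/- (Variant Boussinesq, Case II.) Let a₀ ∈ ℂ. Define u, v : ℝ × ℝ → ℂ by u(x,t) = a₀·(1 - i·tan((i·a₀/2)·(x - a₀·t))) and v(x,t) = a₀·u(x,t) - (1/2)·u(x,t)², where tan is the complex tangent. Then at every (x,t) ∈ ℝ × ℝ with cos((i·a₀/2)·(x - a₀·t)) ≠ 0, the pair (u,v) satisfies the variant Boussinesq equations: ∂ₜu + ∂ₓv + u·∂ₓu = 0 and ∂ₜv + ∂ₓ(u·v) + ∂ₓ∂ₓ∂ₓu = 0, where partial derivatives are derivatives of the one-variable sections. -/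
/-!
The solution is a travelling wave `u(x, t) = W(x - a₀t)` whose profile
`W(w) = a₀(1 - i·tan(i·a₀·w/2))` solves the Riccati equation `W' = a₀W - W²/2`
(because `tan' = 1 + tan²` and `i² = -1`). Hence `uₓ = v`, `vₓ = (a₀ - u)·v`, `uₜ = -a₀uₓ`,
`vₜ = -a₀vₓ`, and differentiating the Riccati equation twice gives
`uₓₓₓ = -v² + (a₀ - u)²·v`; both equations then reduce to polynomial identities in `u, v`.
-/

open Complex Filter Topology

theorem Complex.hasDerivAt_tan_one_add_sq {w : ℂ} (h : cos w ≠ 0) :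
    HasDerivAt tan (1 + tan w ^ 2) w := by
  simpa only [one_div, ← inv_one_add_tan_sq h, inv_inv] using hasDerivAt_tan h

noncomputable def boussinesqProfile (a w : ℂ) : ℂ :=
  a * (1 - I * tan (I * a / 2 * w))

theorem hasDerivAt_boussinesqProfile {a w : ℂ} (h : cos (I * a / 2 * w) ≠ 0) :
    HasDerivAt (boussinesqProfile a)
      (a * boussinesqProfile a w - 1 / 2 * boussinesqProfile a w ^ 2) w := by
  have htan := (hasDerivAt_tan_one_add_sq h).comp w ((hasDerivAt_id w).const_mul (I * a / 2))
  refine ((htan.const_mul I).const_sub 1 |>.const_mul a).congr_deriv ?_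
  simp only [boussinesqProfile, mul_one]
  linear_combination (-(a ^ 2) / 2) * I_sq

section TravellingWave

variable {g : ℂ → ℂ} {g' c : ℂ} {x t : ℝ}

theorem HasDerivAt.comp_ofReal_sub_const_mul (h : HasDerivAt g g' (x - c * t)) :
    HasDerivAt (fun y : ℝ => g (y - c * t)) g' x :=
  (h.comp_sub_const (x : ℂ) (c * t)).comp_ofReal

theorem HasDerivAt.comp_const_sub_mul_ofReal (h : HasDerivAt g g' (x - c * t)) :
    HasDerivAt (fun s : ℝ => g (x - c * s)) (-c * g') t := by
  have hlin : HasDerivAt (fun s : ℂ => (x : ℂ) - c * s) (-c) t := by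
    simpa using ((hasDerivAt_id (t : ℂ)).const_mul c).const_sub (x : ℂ)
  simpa [mul_comm] using (h.comp (t : ℂ) hlin).comp_ofReal

end TravellingWave

section Riccati

variable {𝕜 𝕜' : Type*} [NontriviallyNormedField 𝕜] [NormedField 𝕜'] [NormedAlgebra 𝕜 𝕜']
  [CharZero 𝕜'] {f : 𝕜 → 𝕜'} {f' a : 𝕜'} {x : 𝕜}

theorem HasDerivAt.const_mul_sub_half_sq (hf : HasDerivAt f f' x) (a : 𝕜') :
    HasDerivAt (fun y => a * f y - 1 / 2 * f y ^ 2) ((a - f x) * f') x :=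
  ((hf.const_mul a).sub ((hf.pow 2).const_mul (1 / 2))).congr_deriv (by push_cast; ring)

theorem deriv_deriv_deriv_of_riccati
    (hf : ∀ᶠ y in 𝓝 x, HasDerivAt f (a * f y - 1 / 2 * f y ^ 2) y) :
    deriv (deriv (deriv f)) x
      = -(a * f x - 1 / 2 * f x ^ 2) ^ 2 + (a - f x) ^ 2 * (a * f x - 1 / 2 * f x ^ 2) := by
  set g : 𝕜 → 𝕜' := fun y => a * f y - 1 / 2 * f y ^ 2
  have hg : ∀ᶠ y in 𝓝 x, HasDerivAt g ((a - f y) * g y) y :=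
    hf.mono fun y hy => hy.const_mul_sub_half_sq a
  have hf'' : deriv (deriv f) =ᶠ[𝓝 x] fun y => (a - f y) * g y := by
    filter_upwards [hf.eventually_nhds, hg] with y hfy hgy
    rw [EventuallyEq.deriv_eq (hfy.mono fun z hz => hz.deriv), hgy.deriv]
  rw [hf''.deriv_eq]
  refine ((hf.self_of_nhds.const_sub a).mul hg.self_of_nhds).deriv.trans ?_
  ring

end Riccati

/-- Variant Boussinesq, Case II: `u(x,t) = a₀(1 - i·tan((i·a₀/2)(x - a₀t)))`,
`v = a₀·u - u²/2` solve `uₜ + vₓ + u·uₓ = 0` and `vₜ + (u·v)ₓ + uₓₓₓ = 0`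
wherever `cos((i·a₀/2)(x - a₀t)) ≠ 0`. -/
theorem variant_Boussinesq_solution_case_II
    (a₀ : ℂ) (u v : ℝ → ℝ → ℂ)
    (hu : ∀ x t : ℝ, u x t
      = a₀ * (1 - Complex.I *
          Complex.tan ((Complex.I * a₀ / 2) * ((x : ℂ) - a₀ * (t : ℂ)))))
    (hv : ∀ x t : ℝ, v x t = a₀ * u x t - (1 / 2) * (u x t) ^ 2) :
    ∀ x t : ℝ, Complex.cos ((Complex.I * a₀ / 2) * ((x : ℂ) - a₀ * (t : ℂ))) ≠ 0 →
      (deriv (fun t' : ℝ => u x t') t + deriv (fun x' : ℝ => v x' t) x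
        + u x t * deriv (fun x' : ℝ => u x' t) x = 0) ∧
      (deriv (fun t' : ℝ => v x t') t + deriv (fun x' : ℝ => u x' t * v x' t) x
        + deriv (fun x₁ : ℝ =>
            deriv (fun x₂ : ℝ => deriv (fun x₃ : ℝ => u x₃ t) x₂) x₁) x = 0) := by
  have hu_profile : ∀ x t : ℝ, u x t = boussinesqProfile a₀ (x - a₀ * t) := hu
  have hux : ∀ x t : ℝ, cos (I * a₀ / 2 * (x - a₀ * t)) ≠ 0 →
      HasDerivAt (fun y => u y t) (a₀ * u x t - 1 / 2 * u x t ^ 2) x := by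
    intro x t h
    simpa only [hu_profile] using (hasDerivAt_boussinesqProfile h).comp_ofReal_sub_const_mul
  intro x t hcos
  have hut : HasDerivAt (fun s => u x s) (-a₀ * v x t) t := by
    simpa only [hu_profile, hv] using (hasDerivAt_boussinesqProfile hcos).comp_const_sub_mul_ofReal
  have hux_near :
      ∀ᶠ y in 𝓝 x, HasDerivAt (fun y => u y t) (a₀ * u y t - 1 / 2 * u y t ^ 2) y := by
    have hcont : Continuous fun y : ℝ => cos (I * a₀ / 2 * (y - a₀ * t)) := by fun_prop
    exact (hcont.continuousAt.eventually_ne hcos).mono fun y hy => hux y t hy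
  have hvx : HasDerivAt (fun y => v y t) ((a₀ - u x t) * v x t) x := by
    simpa only [hv] using (hux x t hcos).const_mul_sub_half_sq a₀
  have hvt : HasDerivAt (fun s => v x s) ((a₀ - u x t) * (-a₀ * v x t)) t := by
    simpa only [hv] using hut.const_mul_sub_half_sq a₀
  have huxxx := deriv_deriv_deriv_of_riccati hux_near
  have hux_at := hux x t hcos
  simp only [← hv] at huxxx hux_at
  constructor
  · rw [hut.deriv, hvx.deriv, hux_at.deriv]; ring
  · rw [hvt.deriv, (hux_at.fun_mul hvx).deriv, huxxx]; ring
end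

section
/- (Variant Boussinesq, Case IV.) Let a₀ ∈ ℝ. Define w(x,t) = (√2·a₀/4)·(x - a₀·t), u(x,t) = a₀ - (√2·a₀/2)·(tan(w(x,t)) + cot(w(x,t))), and v(x,t) = a₀·u(x,t) - (1/2)·u(x,t)². Then at every (x,t) ∈ ℝ × ℝ with sin(w(x,t)) ≠ 0 and cos(w(x,t)) ≠ 0, the pair (u,v) satisfies the variant Boussinesq equations: ∂ₜu + ∂ₓv + u·∂ₓu = 0 and ∂ₜv + ∂ₓ(u·v) + ∂ₓ∂ₓ∂ₓu = 0, where partial derivatives are derivatives of the one-variable sections. -/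
/-!
Since `tan w + cot w = 2 / sin (2w)`, the field is a travelling wave
`u = U (x - a₀ t)` with profile `U ξ = a₀ - 2k / sin (k ξ)`, `k = √2 a₀ / 2`.
For any travelling wave with speed `a₀` and `v = a₀ u - u² / 2`, the first equation holds
identically and the second reduces to the ODE `U''' = U' (a₀² - 3 a₀ U + 3/2 U²)`.
For this profile the bracket equals `k² (6 / sin² (k ξ) - 1)` because `a₀² = 2k²`, so the ODE
is the identity `csc''' = csc' (6 csc² - 1)`.
-/

open Real Set

def VariantBoussinesqAt (u v : ℝ → ℝ → ℝ) (x t : ℝ) : Prop :=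
  (deriv (fun t' => u x t') t + deriv (fun x' => v x' t) x
    + u x t * deriv (fun x' => u x' t) x = 0) ∧
  (deriv (fun t' => v x t') t + deriv (fun x' => u x' t * v x' t) x
    + deriv^[3] (fun x' => u x' t) x = 0)

theorem deriv_comp_const_sub_mul (f : ℝ → ℝ) (x a t : ℝ) :
    deriv (fun t' => f (x - a * t')) t = -(a * deriv f (x - a * t)) := by
  rw [deriv_comp_mul_left (f := fun s => f (x - s)), deriv_comp_const_sub, smul_eq_mul, mul_neg]

theorem iteratedDeriv_comp_mul_left (f : ℝ → ℝ) (k : ℝ) (n : ℕ) :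
    iteratedDeriv n (fun ξ => f (k * ξ)) = fun ξ => k ^ n * iteratedDeriv n f (k * ξ) := by
  induction n with
  | zero => simp
  | succ n ih =>
    ext ξ
    rw [iteratedDeriv_succ, ih, deriv_const_mul_field']
    beta_reduce
    rw [deriv_comp_mul_left (f := iteratedDeriv n f), iteratedDeriv_succ, smul_eq_mul]
    ring

theorem variantBoussinesqAt_of_travellingWave {U : ℝ → ℝ} {a x t : ℝ} {u v : ℝ → ℝ → ℝ}
    (hu : ∀ x t, u x t = U (x - a * t))
    (hv : ∀ x t, v x t = a * u x t - 1 / 2 * u x t ^ 2)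
    (hU : DifferentiableAt ℝ U (x - a * t))
    (hode : iteratedDeriv 3 U (x - a * t)
      = deriv U (x - a * t) * (a ^ 2 - 3 * a * U (x - a * t) + 3 / 2 * U (x - a * t) ^ 2)) :
    VariantBoussinesqAt u v x t := by
  let V : ℝ → ℝ := fun ξ => a * U ξ - 1 / 2 * U ξ ^ 2
  obtain rfl : u = fun x t => U (x - a * t) := funext₂ hu
  obtain rfl : v = fun x t => V (x - a * t) := funext₂ hv
  have hV : HasDerivAt V ((a - U (x - a * t)) * deriv U (x - a * t)) (x - a * t) := by
    refine ((hU.hasDerivAt.const_mul a).sub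
      ((hU.hasDerivAt.pow 2).const_mul (1 / 2))).congr_deriv ?_
    push_cast
    ring
  have hUV : HasDerivAt (fun ξ => U ξ * V ξ) _ (x - a * t) := hU.hasDerivAt.mul hV
  refine ⟨?transport, ?dispersion⟩
  case transport =>
    simp only [deriv_comp_const_sub_mul, deriv_comp_sub_const, hV.deriv]
    ring
  case dispersion =>
    rw [← iteratedDeriv_eq_iterate, iteratedDeriv_comp_sub_const]
    beta_reduce
    rw [hode]
    simp only [deriv_comp_const_sub_mul, deriv_comp_sub_const (f := fun ξ => U ξ * V ξ),
      hV.deriv, hUV.deriv]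
    ring

-- Also true where `sin y * cos y = 0`: then both sides are `0` since `x / 0 = 0` and `0⁻¹ = 0`.
theorem tan_add_cos_div_sin (y : ℝ) : tan y + cos y / sin y = 2 * (sin (2 * y))⁻¹ := by
  rw [tan_eq_sin_div_cos, sin_two_mul]
  rcases eq_or_ne (sin y) 0 with hs | hs
  · simp [hs]
  rcases eq_or_ne (cos y) 0 with hc | hc
  · simp [hc]
  field_simp
  rw [sin_sq_add_cos_sq]

theorem iteratedDeriv_three_inv_sin {y : ℝ} (hy : sin y ≠ 0) :
    iteratedDeriv 3 (fun y => (sin y)⁻¹) y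
      = deriv (fun y => (sin y)⁻¹) y * (6 * (sin y)⁻¹ ^ 2 - 1) := by
  have hS : IsOpen {y : ℝ | sin y ≠ 0} := isOpen_ne_fun continuous_sin continuous_const
  have d1 : ∀ y, sin y ≠ 0 → HasDerivAt (fun y => (sin y)⁻¹) (-cos y / sin y ^ 2) y :=
    fun y hy => (hasDerivAt_sin y).inv hy
  have d2 : ∀ y, sin y ≠ 0 →
      HasDerivAt (fun y => -cos y / sin y ^ 2) (2 / sin y ^ 3 - (sin y)⁻¹) y := by
    intro y hy
    refine ((hasDerivAt_cos y).neg.div ((hasDerivAt_sin y).pow 2)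
      (pow_ne_zero 2 hy)).congr_deriv ?_
    simp only [Pi.pow_apply, Pi.neg_apply]
    field_simp
    linear_combination 2 * sin y * sin_sq_add_cos_sq y
  have d3 : HasDerivAt (fun y => 2 / sin y ^ 3 - (sin y)⁻¹)
      (-6 * cos y / sin y ^ 4 + cos y / sin y ^ 2) y := by
    refine (((hasDerivAt_const y 2).div ((hasDerivAt_sin y).pow 3) (pow_ne_zero 3 hy)).sub
      ((hasDerivAt_sin y).inv hy)).congr_deriv ?_
    simp only [Pi.pow_apply]
    field_simp
    ring
  have e1 : EqOn (deriv fun y => (sin y)⁻¹) (fun y => -cos y / sin y ^ 2) {y | sin y ≠ 0} :=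
    fun y hy => (d1 y hy).deriv
  have e2 : EqOn (deriv (deriv fun y => (sin y)⁻¹)) (fun y => 2 / sin y ^ 3 - (sin y)⁻¹)
      {y | sin y ≠ 0} :=
    fun y hy => (e1.deriv hS hy).trans (d2 y hy).deriv
  rw [iteratedDeriv_succ, iteratedDeriv_succ, iteratedDeriv_one, e2.deriv hS hy, d3.deriv,
    (d1 y hy).deriv]
  field_simp
  ring

noncomputable def cosecantProfile (a k ξ : ℝ) : ℝ := a - 2 * k * (sin (k * ξ))⁻¹

theorem differentiableAt_cosecantProfile {a k ξ : ℝ} (hξ : sin (k * ξ) ≠ 0) :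
    DifferentiableAt ℝ (cosecantProfile a k) ξ := by
  unfold cosecantProfile
  fun_prop (disch := exact hξ)

theorem iteratedDeriv_succ_cosecantProfile (a k ξ : ℝ) (n : ℕ) :
    iteratedDeriv (n + 1) (cosecantProfile a k) ξ
      = -(2 * k * k ^ (n + 1) * iteratedDeriv (n + 1) (fun y => (sin y)⁻¹) (k * ξ)) := by
  unfold cosecantProfile
  rw [iteratedDeriv_const_sub n.add_one_pos, iteratedDeriv_neg, iteratedDeriv_const_mul_field,
    iteratedDeriv_comp_mul_left (fun y => (sin y)⁻¹)]
  beta_reduce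
  ring

theorem cosecantProfile_ode {a k ξ : ℝ} (hk : 2 * k ^ 2 = a ^ 2) (hξ : sin (k * ξ) ≠ 0) :
    iteratedDeriv 3 (cosecantProfile a k) ξ = deriv (cosecantProfile a k) ξ
      * (a ^ 2 - 3 * a * cosecantProfile a k ξ + 3 / 2 * cosecantProfile a k ξ ^ 2) := by
  rw [iteratedDeriv_succ_cosecantProfile, ← iteratedDeriv_one, iteratedDeriv_succ_cosecantProfile,
    iteratedDeriv_three_inv_sin hξ, iteratedDeriv_one, cosecantProfile]
  linear_combination (k ^ 2 * deriv (fun y => (sin y)⁻¹) (k * ξ)) * hk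

/-- Variant Boussinesq, Case IV: with `w(x,t) = (√2·a₀/4)(x - a₀t)`,
`u = a₀ - (√2·a₀/2)(tan w + cot w)`, `v = a₀·u - u²/2` solve
`uₜ + vₓ + u·uₓ = 0` and `vₜ + (u·v)ₓ + uₓₓₓ = 0` wherever
`sin w ≠ 0` and `cos w ≠ 0`. -/
theorem variant_Boussinesq_solution_case_IV
    (a₀ : ℝ) (w : ℝ → ℝ → ℝ) (u v : ℝ → ℝ → ℝ)
    (hw : ∀ x t : ℝ, w x t = (Real.sqrt 2 * a₀ / 4) * (x - a₀ * t))
    (hu : ∀ x t : ℝ, u x t = a₀ - (Real.sqrt 2 * a₀ / 2) *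
        (Real.tan (w x t) + Real.cos (w x t) / Real.sin (w x t)))
    (hv : ∀ x t : ℝ, v x t = a₀ * u x t - (1 / 2) * (u x t) ^ 2) :
    ∀ x t : ℝ, Real.sin (w x t) ≠ 0 → Real.cos (w x t) ≠ 0 →
      (deriv (fun t' : ℝ => u x t') t + deriv (fun x' : ℝ => v x' t) x
        + u x t * deriv (fun x' : ℝ => u x' t) x = 0) ∧
      (deriv (fun t' : ℝ => v x t') t + deriv (fun x' : ℝ => u x' t * v x' t) x
        + deriv (fun x₁ : ℝ =>
            deriv (fun x₂ : ℝ => deriv (fun x₃ : ℝ => u x₃ t) x₂) x₁) x = 0) := by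
  intro x t hsin hcos
  set k := √2 * a₀ / 2
  have hk : 2 * k ^ 2 = a₀ ^ 2 := by
    rw [div_pow, mul_pow, sq_sqrt zero_le_two]
    ring
  have hw₂ : ∀ x t, 2 * w x t = k * (x - a₀ * t) := fun x t => by rw [hw]; ring
  have hprofile : ∀ x t, u x t = cosecantProfile a₀ k (x - a₀ * t) := fun x t => by
    rw [hu, tan_add_cos_div_sin, hw₂, cosecantProfile]
    ring
  have hξ : sin (k * (x - a₀ * t)) ≠ 0 := by
    rw [← hw₂, sin_two_mul]
    exact mul_ne_zero (mul_ne_zero two_ne_zero hsin) hcos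
  exact variantBoussinesqAt_of_travellingWave hprofile hv
    (differentiableAt_cosecantProfile hξ) (cosecantProfile_ode hk hξ)
end
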